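/- arXiv:2403.03499 — 2 statements merged into one kernel-verified Lean document; each statement's English description precedes it below -/
import Mathlib

section
/- Let n be a positive integer, A_c an n×n real matrix, λ > 0, and k_s ≥ 0. Suppose ⟪v, A_c v⟫ ≤ −λ‖v‖² for all v ∈ ℝⁿ (Euclidean inner product and norm). If e : [0,∞) → ℝⁿ is differentiable and satisfies ė(t) = A_c e(t) − k_s·sgn(e(t)) for all t ≥ 0, then ‖e(t)‖ ≤ e^{−λt}‖e(0)‖ for all t ≥ 0; in particular e(t) → 0 as t → ∞ (asymptotic convergence of the tracking error under the desired error dynamics). -/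
open scoped RealInnerProductSpace

/-- Componentwise sign function: `sgn(v)ᵢ = 1` if `vᵢ > 0`, `−1` if `vᵢ < 0`, `0` if `vᵢ = 0`. -/
noncomputable def signVec {n : ℕ} (v : EuclideanSpace ℝ (Fin n)) :
    EuclideanSpace ℝ (Fin n) := WithLp.toLp 2 (fun i => Real.sign (v i))

/-- Matrix-vector multiplication on Euclidean space. -/
def mulVecE {n : ℕ} (A : Matrix (Fin n) (Fin n) ℝ) (v : EuclideanSpace ℝ (Fin n)) :
    EuclideanSpace ℝ (Fin n) := WithLp.toLp 2 (fun i => ∑ j, A i j * v j)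

/-!
Along a trajectory, `d/dt ‖e‖² = 2⟪e, A_c e⟫ - 2 k_s ⟪e, sgn e⟫ ≤ -2λ‖e‖²`, since `⟪e, sgn e⟫ = ‖e‖₁ ≥ 0`:
the switching term only dissipates. Grönwall's inequality then gives `‖e t‖² ≤ e^{-2λt} ‖e 0‖²`.
-/

open Filter Topology

lemma inner_signVec_nonneg {n : ℕ} (v : EuclideanSpace ℝ (Fin n)) : 0 ≤ ⟪v, signVec v⟫ := by
  rw [PiLp.inner_apply]
  refine Finset.sum_nonneg fun i _ => ?_
  simp only [signVec, RCLike.inner_apply, conj_trivial]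
  rcases lt_trichotomy (v i) 0 with h | h | h
  · rw [Real.sign_of_neg h]; linarith
  · simp [h]
  · rw [Real.sign_of_pos h]; linarith

lemma inner_mulVecE_sub_smul_signVec_le {n : ℕ} {A : Matrix (Fin n) (Fin n) ℝ} {lam k : ℝ}
    (hA : ∀ v : EuclideanSpace ℝ (Fin n), ⟪v, mulVecE A v⟫ ≤ -lam * ‖v‖ ^ 2) (hk : 0 ≤ k)
    (v : EuclideanSpace ℝ (Fin n)) : ⟪v, mulVecE A v - k • signVec v⟫ ≤ -lam * ‖v‖ ^ 2 := by
  rw [inner_sub_right, real_inner_smul_right]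
  nlinarith [hA v, inner_signVec_nonneg v]

theorem norm_le_exp_mul_norm_of_inner_deriv_le {F : Type*} [NormedAddCommGroup F]
    [InnerProductSpace ℝ F] {f f' : ℝ → F} {c : ℝ} (hf : ∀ t ≥ 0, HasDerivAt f (f' t) t)
    (hdiss : ∀ t ≥ 0, ⟪f t, f' t⟫ ≤ -c * ‖f t‖ ^ 2) {t : ℝ} (ht : 0 ≤ t) :
    ‖f t‖ ≤ Real.exp (-c * t) * ‖f 0‖ := by
  have hsq : ‖f t‖ ^ 2 ≤ ‖f 0‖ ^ 2 * Real.exp (-2 * c * t) := by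
    simpa [gronwallBound_ε0] using
      le_gronwallBound_of_liminf_deriv_right_le (f := fun s => ‖f s‖ ^ 2)
        (f' := fun s => 2 * ⟪f s, f' s⟫) (K := -2 * c) (ε := 0) (a := 0) (b := t)
        (fun s hs => (hf s hs.1).norm_sq.continuousAt.continuousWithinAt)
        (fun s hs _ hr => (hf s hs.1).norm_sq.hasDerivWithinAt.liminf_right_slope_le hr)
        le_rfl (fun s hs => by linarith [hdiss s hs.1]) t ⟨ht, le_rfl⟩
  have hexp : Real.exp (-2 * c * t) = Real.exp (-c * t) ^ 2 := by
    rw [← Real.exp_nat_mul]; ring_nf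
  rw [hexp, ← mul_pow, mul_comm] at hsq
  exact (pow_le_pow_iff_left₀ (norm_nonneg _) (by positivity) two_ne_zero).1 hsq

lemma tendsto_nhds_zero_of_norm_le_exp_neg_mul {E : Type*} [SeminormedAddCommGroup E]
    {f : ℝ → E} {c C : ℝ} (hc : 0 < c) (hf : ∀ t ≥ 0, ‖f t‖ ≤ Real.exp (-c * t) * C) :
    Tendsto f atTop (𝓝 0) := by
  have hexp : Tendsto (fun t => Real.exp (-c * t) * C) atTop (𝓝 0) := by
    simpa using (Real.tendsto_exp_atBot.comp
      (tendsto_id.const_mul_atTop_of_neg (neg_neg_of_pos hc))).mul_const C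
  exact squeeze_zero_norm' (eventually_atTop.2 ⟨0, hf⟩) hexp

theorem desired_error_dynamics_convergence_general (n : ℕ)
    (A_c : Matrix (Fin n) (Fin n) ℝ) (lam k_s : ℝ) (hlam : 0 < lam) (hks : 0 ≤ k_s)
    (hA : ∀ v : EuclideanSpace ℝ (Fin n), ⟪v, mulVecE A_c v⟫ ≤ -lam * ‖v‖ ^ 2)
    (e : ℝ → EuclideanSpace ℝ (Fin n))
    (hde : ∀ t ≥ (0 : ℝ), HasDerivAt e (mulVecE A_c (e t) - k_s • signVec (e t)) t) :
    (∀ t ≥ (0 : ℝ), ‖e t‖ ≤ Real.exp (-lam * t) * ‖e 0‖) ∧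
      Filter.Tendsto e Filter.atTop (nhds 0) := by
  have hdecay : ∀ t ≥ (0 : ℝ), ‖e t‖ ≤ Real.exp (-lam * t) * ‖e 0‖ := fun _ ht =>
    norm_le_exp_mul_norm_of_inner_deriv_le hde
      (fun s _ => inner_mulVecE_sub_smul_signVec_le hA hks (e s)) ht
  exact ⟨hdecay, tendsto_nhds_zero_of_norm_le_exp_neg_mul hlam hdecay⟩

/-- Under the desired error dynamics `ė = A_c e − k_s sgn(e)` with the symmetric part of
`A_c` negative definite (`⟪v, A_c v⟫ ≤ −λ‖v‖²`) and `k_s ≥ 0`, the tracking error decays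
exponentially: `‖e(t)‖ ≤ e^{−λt}‖e(0)‖` for `t ≥ 0`; in particular `e(t) → 0` as `t → ∞`. -/
theorem desired_error_dynamics_convergence (n : ℕ) (hn : 0 < n)
    (A_c : Matrix (Fin n) (Fin n) ℝ) (lam k_s : ℝ) (hlam : 0 < lam) (hks : 0 ≤ k_s)
    (hA : ∀ v : EuclideanSpace ℝ (Fin n), ⟪v, mulVecE A_c v⟫ ≤ -lam * ‖v‖ ^ 2)
    (e : ℝ → EuclideanSpace ℝ (Fin n))
    (hde : ∀ t ≥ (0 : ℝ), HasDerivAt e (mulVecE A_c (e t) - k_s • signVec (e t)) t) :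
    (∀ t ≥ (0 : ℝ), ‖e t‖ ≤ Real.exp (-lam * t) * ‖e 0‖) ∧
      Filter.Tendsto e Filter.atTop (nhds 0) :=
  desired_error_dynamics_convergence_general n A_c lam k_s hlam hks hA e hde
end

section
/- Let n, Ξ be positive integers. Let A_c be an invertible n×n real matrix, Γ a symmetric positive definite Ξ×Ξ real matrix, and μ > 0, γ̄ ≥ 0 real numbers with μ‖v‖² ≤ ⟪v, Γ⁻¹v⟫ for all v ∈ ℝ^Ξ and ‖Γ⁻¹‖ ≤ γ̄ (operator norm). Let ρ > 0, k_s, Φ'_M ≥ 0, Δ̄ ≥ 0, θ̄ ≥ 0 be real numbers and θ* ∈ ℝ^Ξ with ‖θ*‖ ≤ θ̄. Let e : ℝ → ℝⁿ and θ̂ : ℝ → ℝ^Ξ be differentiable, θ̃(t) = θ* − θ̂(t), and let Φ̂' : ℝ → ℝ^{n×Ξ} and Δ : ℝ → ℝⁿ satisfy ‖Φ̂'(t)‖ ≤ Φ'_M and ‖Δ(t)‖ ≤ Δ̄ for all t. Assume the closed-loop error dynamics ė(t) = A_c e(t) − k_s·sgn(e(t)) + Φ̂'(t)·θ̃(t)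 + Δ(t) and the adaptation law θ̂'(t) = −Γ·(A_c⁻¹Φ̂'(t))ᵀ·e(t) − ρ‖e(t)‖·θ̂(t). Define β₂ = (Φ'_M·(‖A_c⁻¹‖ + 1) + ρ·γ̄·θ̄)/(2ρμ). If ρμ·β₂² + Δ̄ ≤ k_s, then the Lyapunov function V(t) = ½‖e(t)‖² + ½⟪θ̃(t), Γ⁻¹θ̃(t)⟫ is differentiable and satisfies V'(t) ≤ ⟪e(t), A_c e(t)⟫ for all t. -/
open scoped RealInnerProductSpace

/-- ℓ² norm is at most the inner product with the sign vector (the ℓ¹ norm). -/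
lemma norm_le_inner_signVec {m : ℕ} (v : EuclideanSpace ℝ (Fin m)) :
    ‖v‖ ≤ ⟪v, signVec v⟫ := by
  have h1 : ⟪v, signVec v⟫ = ∑ i, |v i| := by
    rw [PiLp.inner_apply]
    refine Finset.sum_congr rfl fun i _ => ?_
    show Real.sign (v i) * v i = |v i|
    rcases lt_trichotomy (v i) 0 with h | h | h
    · rw [Real.sign_of_neg h, abs_of_neg h]; ring
    · simp [h]
    · rw [Real.sign_of_pos h, abs_of_pos h]; ring
  have h2 : ‖v‖ ^ 2 ≤ (∑ i, |v i|) ^ 2 := by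
    rw [← real_inner_self_eq_norm_sq, PiLp.inner_apply]
    calc ∑ i, (inner ℝ (v i) (v i) : ℝ) = ∑ i, |v i| ^ 2 := by
          refine Finset.sum_congr rfl fun i _ => ?_
          show v i * v i = |v i| ^ 2
          rw [sq_abs]; ring
      _ ≤ (∑ i, |v i|) ^ 2 :=
          Finset.sum_sq_le_sq_sum_of_nonneg fun i _ => abs_nonneg _
  have h3 : (0:ℝ) ≤ ∑ i, |v i| := Finset.sum_nonneg fun i _ => abs_nonneg _
  rw [h1]
  nlinarith [norm_nonneg v]

set_option maxHeartbeats 1000000 in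
/-- The Lyapunov decrease computation at the heart of Theorem 1: for the closed-loop error
dynamics `ė = A_c e − k_s sgn(e) + Φ̂'θ̃ + Δ` and the adaptation law
`θ̂' = −Γ(A_c⁻¹Φ̂')ᵀe − ρ‖e‖θ̂`, under the gain condition `ρμβ₂² + Δ̄ ≤ k_s` with
`β₂ = (Φ'_M(‖A_c⁻¹‖+1) + ργ̄θ̄)/(2ρμ)`, the Lyapunov function
`V = ½‖e‖² + ½⟪θ̃, Γ⁻¹θ̃⟫` is differentiable and satisfies `V' ≤ ⟪e, A_c e⟫`.
Invertible matrices are encoded as continuous linear equivalences of Euclidean space. -/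
theorem lyapunov_decrease (n Ξ : ℕ) (hn : 0 < n) (hΞ : 0 < Ξ)
    (A_c : EuclideanSpace ℝ (Fin n) ≃L[ℝ] EuclideanSpace ℝ (Fin n))
    (Γ : EuclideanSpace ℝ (Fin Ξ) ≃L[ℝ] EuclideanSpace ℝ (Fin Ξ))
    (hΓsymm : ∀ v w : EuclideanSpace ℝ (Fin Ξ), ⟪Γ v, w⟫ = ⟪v, Γ w⟫)
    (hΓpos : ∀ v : EuclideanSpace ℝ (Fin Ξ), v ≠ 0 → 0 < ⟪v, Γ v⟫)
    (μ γbar : ℝ) (hμ : 0 < μ) (hγbar : 0 ≤ γbar)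
    (hμΓ : ∀ v : EuclideanSpace ℝ (Fin Ξ), μ * ‖v‖ ^ 2 ≤ ⟪v, Γ.symm v⟫)
    (hΓinv : ‖(Γ.symm : EuclideanSpace ℝ (Fin Ξ) →L[ℝ] EuclideanSpace ℝ (Fin Ξ))‖ ≤ γbar)
    (ρ k_s ΦM Δbar θbar : ℝ) (hρ : 0 < ρ) (hks : 0 ≤ k_s) (hΦM : 0 ≤ ΦM)
    (hΔbar : 0 ≤ Δbar) (hθbar : 0 ≤ θbar)
    (θstar : EuclideanSpace ℝ (Fin Ξ)) (hθstar : ‖θstar‖ ≤ θbar)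
    (e : ℝ → EuclideanSpace ℝ (Fin n)) (θhat : ℝ → EuclideanSpace ℝ (Fin Ξ))
    (he : Differentiable ℝ e) (hθhat : Differentiable ℝ θhat)
    (Φ' : ℝ → (EuclideanSpace ℝ (Fin Ξ) →L[ℝ] EuclideanSpace ℝ (Fin n)))
    (Δ : ℝ → EuclideanSpace ℝ (Fin n))
    (hΦ'bdd : ∀ t, ‖Φ' t‖ ≤ ΦM) (hΔbdd : ∀ t, ‖Δ t‖ ≤ Δbar)
    (hdyn : ∀ t, deriv e t =
      A_c (e t) - k_s • signVec (e t) + Φ' t (θstar - θhat t) + Δ t)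
    (hadapt : ∀ t, deriv θhat t =
      -(Γ ((((A_c.symm : EuclideanSpace ℝ (Fin n) →L[ℝ] EuclideanSpace ℝ (Fin n)).comp
          (Φ' t)).adjoint) (e t)))
        - (ρ * ‖e t‖) • θhat t)
    (β₂ : ℝ)
    (hβ₂ : β₂ = (ΦM * (‖(A_c.symm : EuclideanSpace ℝ (Fin n) →L[ℝ] EuclideanSpace ℝ (Fin n))‖ + 1)
        + ρ * γbar * θbar) / (2 * (ρ * μ)))
    (hgain : ρ * μ * β₂ ^ 2 + Δbar ≤ k_s)
    (V : ℝ → ℝ)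
    (hV : ∀ t, V t = (1 / 2) * ‖e t‖ ^ 2
        + (1 / 2) * ⟪θstar - θhat t, Γ.symm (θstar - θhat t)⟫) :
    Differentiable ℝ V ∧ ∀ t, deriv V t ≤ ⟪e t, A_c (e t)⟫ := by
  classical
  set Ainv := (A_c.symm : EuclideanSpace ℝ (Fin n) →L[ℝ] EuclideanSpace ℝ (Fin n)) with hAinv
  set Γinv := (Γ.symm : EuclideanSpace ℝ (Fin Ξ) →L[ℝ] EuclideanSpace ℝ (Fin Ξ)) with hΓi
  -- the derivative of V
  have hVD : ∀ t, HasDerivAt V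
      (⟪e t, deriv e t⟫ + ⟪θstar - θhat t, Γinv (-(deriv θhat t))⟫) t := by
    intro t
    have hθ' : HasDerivAt (fun s => θstar - θhat s) (-(deriv θhat t)) t := by
      have := (hasDerivAt_const t θstar).sub (hθhat t).hasDerivAt; rwa [zero_sub] at this
    have hE : HasDerivAt e (deriv e t) t := (he t).hasDerivAt
    have hG : HasDerivAt (fun s => Γinv (θstar - θhat s)) (Γinv (-(deriv θhat t))) t :=
      Γinv.hasFDerivAt.comp_hasDerivAt t hθ'
    have h1 := hE.inner ℝ hE
    have h2 := hθ'.inner ℝ hG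
    have hVeq : V = fun s => (1/2) * ⟪e s, e s⟫
        + (1/2) * ⟪θstar - θhat s, Γinv (θstar - θhat s)⟫ := by
      funext s
      rw [hV s, real_inner_self_eq_norm_sq]
      rfl
    rw [hVeq]
    have h3 := (h1.const_mul (1/2 : ℝ)).add (h2.const_mul (1/2 : ℝ))
    refine HasDerivAt.congr_deriv h3 ?_
    have hsym : ⟪-(deriv θhat t), Γinv (θstar - θhat t)⟫
        = ⟪θstar - θhat t, Γinv (-(deriv θhat t))⟫ := by
      have h := hΓsymm (Γ.symm (-(deriv θhat t))) (Γ.symm (θstar - θhat t))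
      simp only [Γ.apply_symm_apply] at h
      have h' : (⟪Γinv (-(deriv θhat t)), θstar - θhat t⟫ : ℝ)
          = ⟪-(deriv θhat t), Γinv (θstar - θhat t)⟫ := by
        simpa [Γinv] using h.symm
      rw [← h', real_inner_comm]
    have hc := real_inner_comm (e t) (deriv e t)
    linarith
  refine ⟨fun t => (hVD t).differentiableAt, fun t => ?_⟩
  set E := e t with hE
  set T := θstar - θhat t with hT
  have hθhatT : θhat t = θstar - T := by rw [hT]; abel
  -- compute deriv V t
  have hneg : -(deriv θhat t)
      = Γ ((Ainv.comp (Φ' t)).adjoint E) + (ρ * ‖E‖) • θhat t := by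
    rw [hadapt t]; abel
  have hΓinvneg : Γinv (-(deriv θhat t))
      = (Ainv.comp (Φ' t)).adjoint E + (ρ * ‖E‖) • Γinv (θhat t) := by
    rw [hneg]
    simp [Γinv, map_add, map_smul]
  have hadj : (⟪T, (Ainv.comp (Φ' t)).adjoint E⟫ : ℝ) = ⟪Ainv (Φ' t T), E⟫ := by
    rw [ContinuousLinearMap.adjoint_inner_right]
    simp
  have hθi : (⟪T, Γinv (θhat t)⟫ : ℝ) = ⟪T, Γinv θstar⟫ - ⟪T, Γinv T⟫ := by
    rw [hθhatT, map_sub, inner_sub_right]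
  have hinner2 : (⟪T, Γinv (-(deriv θhat t))⟫ : ℝ)
      = ⟪Ainv (Φ' t T), E⟫ + ρ * ‖E‖ * (⟪T, Γinv θstar⟫ - ⟪T, Γinv T⟫) := by
    rw [hΓinvneg, inner_add_right, hadj, real_inner_smul_right, hθi]
  have hinner1 : (⟪E, deriv e t⟫ : ℝ)
      = ⟪E, A_c E⟫ - k_s * ⟪E, signVec E⟫ + ⟪E, Φ' t T⟫ + ⟪E, Δ t⟫ := by
    rw [hdyn t, ← hE, ← hT, inner_add_right, inner_add_right, inner_sub_right,
      real_inner_smul_right]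
  have hder : deriv V t = ⟪E, A_c E⟫ - k_s * ⟪E, signVec E⟫ + ⟪E, Φ' t T⟫ + ⟪E, Δ t⟫
      + ⟪Ainv (Φ' t T), E⟫ + ρ * ‖E‖ * (⟪T, Γinv θstar⟫ - ⟪T, Γinv T⟫) := by
    rw [(hVD t).deriv, ← hE, ← hT, hinner1, hinner2]
    ring
  -- bounds
  have hE0 : (0:ℝ) ≤ ‖E‖ := norm_nonneg _
  have hT0 : (0:ℝ) ≤ ‖T‖ := norm_nonneg _
  have hΦT : ‖Φ' t T‖ ≤ ΦM * ‖T‖ :=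
    le_trans ((Φ' t).le_opNorm T) (mul_le_mul_of_nonneg_right (hΦ'bdd t) hT0)
  have b1 : (⟪E, Φ' t T⟫ : ℝ) ≤ ‖E‖ * (ΦM * ‖T‖) :=
    le_trans (real_inner_le_norm _ _) (mul_le_mul_of_nonneg_left hΦT hE0)
  have b2 : (⟪Ainv (Φ' t T), E⟫ : ℝ) ≤ ‖Ainv‖ * (ΦM * ‖T‖) * ‖E‖ := by
    refine le_trans (real_inner_le_norm _ _) ?_
    have h4 : ‖Ainv (Φ' t T)‖ ≤ ‖Ainv‖ * (ΦM * ‖T‖) :=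
      le_trans (Ainv.le_opNorm _) (mul_le_mul_of_nonneg_left hΦT (norm_nonneg _))
    exact mul_le_mul_of_nonneg_right h4 hE0
  have b3 : (⟪E, Δ t⟫ : ℝ) ≤ ‖E‖ * Δbar :=
    le_trans (real_inner_le_norm _ _)
      (mul_le_mul_of_nonneg_left (hΔbdd t) hE0)
  have b4 : (⟪T, Γinv θstar⟫ : ℝ) ≤ ‖T‖ * (γbar * θbar) := by
    refine le_trans (real_inner_le_norm _ _) ?_
    have h4 : ‖Γinv θstar‖ ≤ γbar * θbar :=
      le_trans (Γinv.le_opNorm _)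
        (mul_le_mul hΓinv hθstar (norm_nonneg _) hγbar)
    exact mul_le_mul_of_nonneg_left h4 hT0
  have b5 : μ * ‖T‖ ^ 2 ≤ ⟪T, Γinv T⟫ := hμΓ T
  have b6 : ‖E‖ ≤ ⟪E, signVec E⟫ := norm_le_inner_signVec E
  have h2ρμ : (2 * (ρ * μ)) ≠ 0 := by positivity
  have hβeq : β₂ * (2 * (ρ * μ)) = ΦM * (‖Ainv‖ + 1) + ρ * γbar * θbar := by
    rw [hβ₂, div_mul_cancel₀ _ h2ρμ]
  have hβxy : (ΦM * (‖Ainv‖ + 1) + ρ * γbar * θbar) * (‖E‖ * ‖T‖)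
      = β₂ * (2 * (ρ * μ)) * (‖E‖ * ‖T‖) := by rw [hβeq]
  rw [hder]
  nlinarith [mul_le_mul_of_nonneg_left b6 hks,
    mul_le_mul_of_nonneg_left b4 (mul_nonneg hρ.le hE0),
    mul_le_mul_of_nonneg_left b5 (mul_nonneg hρ.le hE0),
    mul_nonneg (mul_nonneg hρ.le hμ.le) (mul_nonneg hE0 (sq_nonneg (‖T‖ - β₂))),
    mul_nonneg hE0 (sub_nonneg.2 hgain), b1, b2, b3]
end
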